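/- Let l < k with gcd(l,k) = d, k = n d with n > 1. Define Z_n(x) = C_{n+1}(x) + x C_{n-1}(x)^{2^l}, where C_i are given by C_1=C_2=1, C_{i+2}(x)=C_{i+1}(x)+x^{2^{il}}C_i(x). Then for every u in GF(2^k), Z_n(u) lies in the subfield GF(2^d). -/

import Mathlib

/-!
In characteristic 2, with `q = 2 ^ l`, the recursion for `C` can be rewritten in the Frobenius
form `C_{m+2} = C_{m+1} ^ q + u ^ q * C_m ^ (q ^ 2)`. Since `k ∣ n * l`, every `u ∈ GF(2^k)`
satisfies `u ^ (2 ^ (n * l)) = u`, and the two forms of the recursion then give `Z_n(u) ^ q = Z_n(u)`.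
So `Z_n(u)` is a periodic point of squaring with periods `l` and `k`, hence with period `gcd(l, k) = d`.
-/

/-- The sequence `C_1 = C_2 = 1`, `C_{i+2}(x) = C_{i+1}(x) + x^(2^(i*l)) * C_i(x)`
(with `C_0 = 0`), evaluated at `u`. -/
def Cseq (l : ℕ) {F : Type*} [Field F] (u : F) : ℕ → F
  | 0 => 0
  | 1 => 1
  | 2 => 1
  | (i + 3) => Cseq l u (i + 2) + u ^ (2 ^ ((i + 1) * l)) * Cseq l u (i + 1)

/-- `Z_n(x) = C_{n+1}(x) + x * C_{n-1}(x)^(2^l)`, evaluated at `u`. -/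
def Zseq (l n : ℕ) {F : Type*} [Field F] (u : F) : F :=
  Cseq l u (n + 1) + u * (Cseq l u (n - 1)) ^ (2 ^ l)

open Function

lemma isPeriodicPt_pow_iff {M : Type*} [Monoid M] {p n : ℕ} {x : M} :
    IsPeriodicPt (· ^ p) n x ↔ x ^ p ^ n = x := by
  simp only [IsPeriodicPt, IsFixedPt, pow_iterate]

lemma pow_two_pow_pow_two_pow {M : Type*} [Monoid M] (x : M) (a b : ℕ) :
    (x ^ 2 ^ a) ^ 2 ^ b = x ^ 2 ^ (a + b) := by
  rw [← pow_mul, ← pow_add]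

section

variable {F : Type*} [Field F] (l : ℕ) (u : F)

lemma Cseq_add_two (m : ℕ) :
    Cseq l u (m + 2) = Cseq l u (m + 1) + u ^ 2 ^ (m * l) * Cseq l u m := by
  cases m with
  | zero => simp [Cseq]
  | succ m => rfl

variable [CharP F 2]

lemma Cseq_add_two_pow_two_pow (m j : ℕ) :
    Cseq l u (m + 2) ^ 2 ^ j
      = Cseq l u (m + 1) ^ 2 ^ j + u ^ 2 ^ (m * l + j) * Cseq l u m ^ 2 ^ j := by
  rw [Cseq_add_two, add_pow_char_pow, mul_pow, pow_two_pow_pow_two_pow]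

lemma Cseq_add_two_eq_frobenius :
    ∀ m : ℕ, Cseq l u (m + 2) =
      Cseq l u (m + 1) ^ 2 ^ l + u ^ 2 ^ l * Cseq l u m ^ 2 ^ (2 * l)
  | 0 => by simp [Cseq]
  | 1 => by simp [Cseq]
  | m + 2 => by
    have h1 := Cseq_add_two_pow_two_pow l u (m + 1) l
    have h2 := Cseq_add_two_pow_two_pow l u m (2 * l)
    rw [show (m + 1) * l + l = (m + 2) * l by ring] at h1
    rw [show m * l + 2 * l = (m + 2) * l by ring] at h2
    linear_combination Cseq_add_two l u (m + 2) + Cseq_add_two_eq_frobenius (m + 1)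
      + u ^ 2 ^ ((m + 2) * l) * Cseq_add_two_eq_frobenius m - h1 - u ^ 2 ^ l * h2

lemma Zseq_pow_two_pow_eq_self {n : ℕ} (hu : u ^ 2 ^ (n * l) = u) :
    Zseq l n u ^ 2 ^ l = Zseq l n u := by
  match n, hu with
  | 0, _ | 1, _ => simp [Zseq, Cseq]
  | m + 2, hu =>
    have h := Cseq_add_two_pow_two_pow l u (m + 1) l
    rw [show (m + 1) * l + l = (m + 2) * l by ring, hu] at h
    rw [Zseq, show m + 2 - 1 = m + 1 from rfl, add_pow_char_pow, mul_pow]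
    linear_combination h - Cseq_add_two_eq_frobenius l u (m + 1)

end

theorem stmt_7_general (k l d n : ℕ) (hd : Nat.gcd l k = d) (hk : k = n * d)
    (F : Type*) [Field F] [Fintype F] (hF : Fintype.card F = 2 ^ k)
    (u : F) :
    (Zseq l n u) ^ (2 ^ d) = Zseq l n u := by
  have := charP_of_card_eq_prime_pow hF
  have hfix (x : F) : IsPeriodicPt (· ^ 2) k x :=
    isPeriodicPt_pow_iff.2 (hF ▸ FiniteField.pow_card x)
  obtain ⟨t, ht⟩ : d ∣ l := hd ▸ Nat.gcd_dvd_left l k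
  have hu : IsPeriodicPt (· ^ 2) (n * l) u := by
    rw [ht, ← mul_assoc, ← hk]
    exact (hfix u).mul_const t
  have hZ := Zseq_pow_two_pow_eq_self l u (isPeriodicPt_pow_iff.1 hu)
  rw [← isPeriodicPt_pow_iff, ← hd]
  exact (isPeriodicPt_pow_iff.2 hZ).gcd (hfix _)

/-- `Z_n(u)` lies in the subfield `GF(2^d)` of `GF(2^k)`,
i.e. it is fixed by the map `x ↦ x^(2^d)`. -/
theorem stmt_7 (k l d n : ℕ) (hlk : l < k) (hd : Nat.gcd l k = d) (hk : k = n * d)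
    (hn : 1 < n)
    (F : Type*) [Field F] [Fintype F] (hF : Fintype.card F = 2 ^ k)
    (u : F) :
    (Zseq l n u) ^ (2 ^ d) = Zseq l n u :=
  stmt_7_general k l d n hd hk F hF u
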